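/- If {w_i}_{i=1}^{d²} ⊆ ℂ^d is a set of d² unit vectors such that |⟨w_i, w_j⟩|² = c for all i ≠ j, where c ≠ 1, then c = 1/(d+1). -/

import Mathlib

/-!
The rank-one projectors `Pᵢ = wᵢ wᵢ*` satisfy `tr Pᵢ = 1` and `tr (Pᵢ Pⱼ) = |⟨wᵢ, wⱼ⟩|²`.
The `d² + 1` matrices `P₁, …, P_{d²}, 1` in the `d²`-dimensional space `M_d(ℂ)` satisfy a
nontrivial linear relation. Pairing it with each `Pⱼ` under `(X, Y) ↦ tr (X Y)` forces all
coefficients of the `Pᵢ` to be equal (as `c ≠ 1`) and nonzero, and then pairing it with `1`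
yields `d² = d (1 + c (d² - 1))`, i.e. `c = 1 / (d + 1)`.
-/

open Matrix

section FrameIdentity

variable {K V ι : Type*} [Field K] [Fintype ι]

theorem sum_mul_ite_one_eq [DecidableEq ι] (a : ι → K) (j : ι) (c : K) :
    ∑ i, a i * (if i = j then 1 else c) = c * ∑ i, a i + (1 - c) * a j := by
  have h : ∀ i, a i * (if i = j then 1 else c) = c * a i + if i = j then (1 - c) * a i else 0 := by
    intro i; split_ifs <;> ring
  simp only [h, Finset.sum_add_distrib, ← Finset.mul_sum, Finset.sum_ite_eq', Finset.mem_univ,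
    if_true]

variable [AddCommGroup V] [Module K V] [Module.Finite K V] [Nonempty ι] [DecidableEq ι]

theorem card_eq_mul_of_finrank_le (B : LinearMap.BilinForm K V) (P : ι → V) (e : V) {c : K}
    (hc : c ≠ 1) (hPP : ∀ i j, B (P i) (P j) = if i = j then 1 else c)
    (hPe : ∀ i, B (P i) e = 1) (heP : ∀ j, B e (P j) = 1)
    (hrank : Module.finrank K V ≤ Fintype.card ι) :
    (Fintype.card ι : K) = B e e * (1 + c * (Fintype.card ι - 1)) := by
  have hdep : ¬ LinearIndependent K (fun o : Option ι => o.elim e P) := fun h => by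
    have := h.fintype_card_le_finrank
    rw [Fintype.card_option] at this
    omega
  obtain ⟨g, hg, o, hgo⟩ := Fintype.not_linearIndependent_iff.1 hdep
  rw [Fintype.sum_option] at hg
  set μ := g none
  set a := fun i => g (some i)
  set Λ := ∑ i, a i
  have hrow : ∀ j, μ + c * Λ + (1 - c) * a j = 0 := fun j => by
    have := congrArg (fun x => B x (P j)) hg
    simp only [Option.elim, map_add, map_sum, map_smul, LinearMap.add_apply,
      LinearMap.sum_apply, LinearMap.smul_apply, smul_eq_mul, heP, hPP,
      sum_mul_ite_one_eq, map_zero, LinearMap.zero_apply] at this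
    linear_combination this
  have htrace : μ * B e e + Λ = 0 := by
    have := congrArg (fun x => B x e) hg
    simpa [hPe] using this
  set α := -(μ + c * Λ) / (1 - c)
  have ha : ∀ j, a j = α := fun j => by
    rw [eq_div_iff (sub_ne_zero.2 hc.symm)]
    linear_combination hrow j
  have hΛ : Λ = Fintype.card ι * α := by simp [Λ, ha]
  have hα : α ≠ 0 := by
    rintro hα
    obtain ⟨j⟩ := ‹Nonempty ι›
    have hμ : μ = 0 := by simpa [ha, hΛ, hα] using hrow j
    cases o with
    | none => exact hgo hμ
    | some i => exact hgo (by simpa [hα] using ha i)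
  have hrow' := hrow (Classical.arbitrary ι)
  rw [ha, hΛ] at hrow'
  rw [hΛ] at htrace
  clear_value μ α
  apply mul_left_cancel₀ hα
  linear_combination htrace - B e e * hrow'

end FrameIdentity

def Matrix.traceForm (n R : Type*) [Fintype n] [CommSemiring R] :
    LinearMap.BilinForm R (Matrix n n R) :=
  (LinearMap.mul R _).compr₂ (traceLinearMap n R R)

@[simp]
theorem Matrix.traceForm_apply {n R : Type*} [Fintype n] [CommSemiring R] (X Y : Matrix n n R) :
    traceForm n R X Y = trace (X * Y) := rfl

section RankOne

variable {n : Type*} [Fintype n]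

theorem trace_vecMulVec_star (v : EuclideanSpace ℂ n) :
    trace (vecMulVec v.ofLp (star v.ofLp)) = (‖v‖ : ℂ) ^ 2 := by
  rw [trace_vecMulVec]
  exact inner_self_eq_norm_sq_to_K (𝕜 := ℂ) v

theorem trace_vecMulVec_star_mul_vecMulVec_star (u v : EuclideanSpace ℂ n) :
    trace (vecMulVec u.ofLp (star u.ofLp) * vecMulVec v.ofLp (star v.ofLp))
      = (‖(inner ℂ u v : ℂ)‖ : ℂ) ^ 2 := by
  rw [vecMulVec_mul_vecMulVec, trace_vecMulVec, dotProduct_smul, smul_eq_mul, dotProduct_comm]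
  have h := RCLike.mul_conj (inner ℂ u v)
  rwa [inner_conj_symm] at h

theorem card_eq_of_equiangular [DecidableEq n] {ι : Type*} [Fintype ι] [Nonempty ι] [DecidableEq ι]
    (w : ι → EuclideanSpace ℂ n) (hw : ∀ i, ‖w i‖ = 1) {c : ℝ}
    (hang : ∀ i j, i ≠ j → ‖(inner ℂ (w i) (w j) : ℂ)‖ ^ 2 = c) (hc : c ≠ 1)
    (hcard : Fintype.card n ^ 2 ≤ Fintype.card ι) :
    (Fintype.card ι : ℝ) = Fintype.card n * (1 + c * (Fintype.card ι - 1)) := by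
  have h := card_eq_mul_of_finrank_le (traceForm n ℂ)
    (fun i => vecMulVec (w i).ofLp (star (w i).ofLp)) 1 (c := (c : ℂ)) (by exact_mod_cast hc)
    (fun i j => by
      split_ifs with hij
      · simp [trace_vecMulVec_star_mul_vecMulVec_star, hij, hw]
      · simp [trace_vecMulVec_star_mul_vecMulVec_star, ← hang i j hij])
    (fun i => by simp only [traceForm_apply, mul_one, trace_vecMulVec_star, hw]; simp)
    (fun j => by simp only [traceForm_apply, one_mul, trace_vecMulVec_star, hw]; simp)
    (by simpa [Module.finrank_matrix, sq] using hcard)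
  simp only [traceForm_apply, mul_one, trace_one] at h
  exact_mod_cast h

end RankOne

theorem equiangular_constant {d : ℕ} (hd : 2 ≤ d) (c : ℝ)
    (w : Fin (d ^ 2) → EuclideanSpace ℂ (Fin d))
    (hw : ∀ i, ‖w i‖ = 1)
    (hang : ∀ i j, i ≠ j → ‖(inner ℂ (w i) (w j) : ℂ)‖ ^ 2 = c)
    (hc : c ≠ 1) :
    c = 1 / (d + 1) := by
  have : NeZero (d ^ 2) := ⟨by positivity⟩
  have hframe := card_eq_of_equiangular w hw hang hc (by simp)
  simp only [Fintype.card_fin, Nat.cast_pow] at hframe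
  have hd' : (2 : ℝ) ≤ d := by exact_mod_cast hd
  have h : ((d : ℝ) * (d - 1)) * (c * (d + 1) - 1) = 0 := by linear_combination -hframe
  have hc' := (mul_eq_zero.1 h).resolve_left (by nlinarith)
  field_simp
  linarith
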